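/- Correspondence of halves along matched axes: Let S and S' be open connected subsets of ℝ^d and h : S → S' a smooth diffeomorphism. Let A be a discrete coordination on S whose axis-separator set 𝒢(A) has a backbone, let B be a discrete coordination on S', and suppose h(grid_S(A)) = grid_{S'}(B). Then there exists a permutation σ of {1,…,d} such that for every i, with j = σ(i), one has n_i = m_j =: K and the image under h of the family of halves along axis i equals the family of halves along axis j: {h(Γ_S⁻(i,A_{i,k})) : 1 ≤ k ≤ K} ∪ {h(Γ_S⁺(i,A_{i,k})) : 1 ≤ k ≤ K} = {Γ_{S'}⁻(j,B_{j,k}) : 1 ≤ k ≤ K} ∪ {Γ_{S'}⁺(j,B_{j,k}) : 1 ≤ k ≤ K} as sets of subsets of S'. -/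

import Mathlib

open Set MeasureTheory Topology

noncomputable section

abbrev Euc (d : ℕ) := EuclideanSpace ℝ (Fin d)

/-- Axis separator: points of `S` whose `i`-th coordinate equals `τ`. -/
def Gamma {d : ℕ} (S : Set (Euc d)) (i : Fin d) (τ : ℝ) : Set (Euc d) :=
  {z | z ∈ S ∧ z i = τ}

/-- Positive half: points of `S` whose `i`-th coordinate is greater than `τ`. -/
def GammaPos {d : ℕ} (S : Set (Euc d)) (i : Fin d) (τ : ℝ) : Set (Euc d) :=
  {z | z ∈ S ∧ τ < z i}

/-- Negative half: points of `S` whose `i`-th coordinate is less than `τ`. -/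
def GammaNeg {d : ℕ} (S : Set (Euc d)) (i : Fin d) (τ : ℝ) : Set (Euc d) :=
  {z | z ∈ S ∧ z i < τ}

/-- `Γ_S(i,τ)` is an axis-separator of `S`: it is nonempty and connected, and both of
its halves are nonempty and connected. (`IsConnected` includes nonemptiness.) -/
def IsAxisSeparator {d : ℕ} (S : Set (Euc d)) (i : Fin d) (τ : ℝ) : Prop :=
  IsConnected (Gamma S i τ) ∧ IsConnected (GammaPos S i τ) ∧ IsConnected (GammaNeg S i τ)

/-- A smooth diffeomorphism from `S` onto `S'` with explicit inverse `hinv`. -/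
structure IsSmoothDiffeoOn {d : ℕ} (h hinv : Euc d → Euc d) (S S' : Set (Euc d)) : Prop where
  mapsTo : Set.MapsTo h S S'
  mapsTo_inv : Set.MapsTo hinv S' S
  left_inv : ∀ z ∈ S, hinv (h z) = z
  right_inv : ∀ z' ∈ S', h (hinv z') = z'
  smooth : ContDiffOn ℝ (⊤ : ℕ∞) h S
  smooth_inv : ContDiffOn ℝ (⊤ : ℕ∞) hinv S'

/-- A discrete coordination on `S`: for each axis `i`, a strictly increasing nonempty tuple
of thresholds, each giving an axis-separator of `S`. -/
structure DiscreteCoordination {d : ℕ} (S : Set (Euc d)) where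
  n : Fin d → ℕ
  n_pos : ∀ i, 0 < n i
  A : (i : Fin d) → Fin (n i) → ℝ
  mono : ∀ i, StrictMono (A i)
  sep : ∀ i k, IsAxisSeparator S i (A i k)

/-- The grid of a discrete coordination: the union of all its axis-separators. -/
def DiscreteCoordination.grid {d : ℕ} {S : Set (Euc d)} (C : DiscreteCoordination S) :
    Set (Euc d) :=
  ⋃ (i : Fin d), ⋃ (k : Fin (C.n i)), Gamma S i (C.A i k)

/-- The parallel-separator-set along axis `i`. -/
def DiscreteCoordination.axisSet {d : ℕ} {S : Set (Euc d)} (C : DiscreteCoordination S)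
    (i : Fin d) : Set (Set (Euc d)) :=
  {H | ∃ k : Fin (C.n i), H = Gamma S i (C.A i k)}

/-- The axis-separator set of a discrete coordination. -/
def DiscreteCoordination.sepSet {d : ℕ} {S : Set (Euc d)} (C : DiscreteCoordination S) :
    Set (Set (Euc d)) :=
  {H | ∃ (i : Fin d) (k : Fin (C.n i)), H = Gamma S i (C.A i k)}

/-- A backbone: a choice of one separator per axis such that they all meet in a single
point and each of them meets every separator of the grid lying on a different axis. -/
def DiscreteCoordination.HasBackbone {d : ℕ} {S : Set (Euc d)}
    (C : DiscreteCoordination S) : Prop :=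
  ∃ kstar : (i : Fin d) → Fin (C.n i),
    (∃ z : Euc d, (⋂ (i : Fin d), Gamma S i (C.A i (kstar i))) = {z}) ∧
    ∀ (i j : Fin d), j ≠ i → ∀ k : Fin (C.n j),
      (Gamma S i (C.A i (kstar i)) ∩ Gamma S j (C.A j k)).Nonempty

/-- Quantization: `Q(x;T) = Σ_k 1[x ≥ T_k]`. -/
def Q {K : ℕ} (x : ℝ) (T : Fin K → ℝ) : ℕ :=
  (Finset.univ.filter fun k : Fin K => T k ≤ x).card

/-- Quantization with order reversal: `Q⁻(x;T) = Σ_k 1[x ≤ T_k]`. -/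
def Qneg {K : ℕ} (x : ℝ) (T : Fin K → ℝ) : ℕ :=
  (Finset.univ.filter fun k : Fin K => x ≤ T k).card

/-- Signed quantization: `Q^{+1} = Q` and `Q^{-1} = Q⁻`. -/
def Qsgn {K : ℕ} (s : ℤ) (x : ℝ) (T : Fin K → ℝ) : ℕ :=
  if s = 1 then Q x T else Qneg x T

/-- `μ` (absolutely continuous w.r.t. Lebesgue) has a non-removable discontinuity at `z`
if every measurable density of `μ` w.r.t. Lebesgue measure is discontinuous at `z`. -/
def HasNonRemovableDiscont {d : ℕ} (μ : Measure (Euc d)) (z : Euc d) : Prop :=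
  ∀ q : Euc d → ENNReal, Measurable q → μ = volume.withDensity q → ¬ ContinuousAt q z

/-- `T` has exactly two connected components, namely `Cp` and `Cm`. -/
def TwoComponents {d : ℕ} (T Cp Cm : Set (Euc d)) : Prop :=
  Cp ≠ Cm ∧
  (∃ x ∈ T, connectedComponentIn T x = Cp) ∧
  (∃ x ∈ T, connectedComponentIn T x = Cm) ∧
  ∀ x ∈ T, connectedComponentIn T x = Cp ∨ connectedComponentIn T x = Cm

/-- The intersection set of a finite family of separators: points lying on at least two
distinct members. -/
def interSet {d M : ℕ} (H : Fin M → Set (Euc d)) : Set (Euc d) :=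
  ⋃ (m : Fin M), ⋃ (m' : Fin M), ⋃ (_ : m ≠ m'), H m ∩ H m'

/-!
Each separator `Γ` of `A` is a connected, relatively open piece of a coordinate hyperplane which
`h` maps into the finitely many coordinate hyperplanes carrying the grid of `B`. By Baire, the
pieces of `Γ` sent into a fixed hyperplane have interiors with dense union. On such an interior
the corresponding coordinate of `Dh` vanishes along `Γ`, and as `Dh` is invertible this happens
for at most one hyperplane at each point; so the closures of these interiors are disjoint closed
sets covering `Γ`, and connectedness puts `h(Γ)` into a single separator of `B`. The same for
`h⁻¹` gives equality, and the halves of a separator, being the components of its complement,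
go to the halves of its image. Finally the backbone separator of axis `i` meets every separator
of every other axis, while images of meeting separators of different axes lie on different axes;
this sends all separators of axis `i` to one axis `σ i`, with `σ` a permutation.
-/

open Filter

section Separators

variable {d : ℕ} {S : Set (Euc d)}

theorem gammaNeg_union_gammaPos (S : Set (Euc d)) (i : Fin d) (a : ℝ) :
    GammaNeg S i a ∪ GammaPos S i a = S \ Gamma S i a := by
  ext z
  simp only [GammaNeg, GammaPos, Gamma, mem_union, Set.mem_sdiff, mem_ofPred_eq]
  constructor
  · rintro (⟨hz, ha⟩ | ⟨hz, ha⟩) <;> exact ⟨hz, fun h => by linarith [h.2]⟩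
  · rintro ⟨hz, ha⟩
    rcases lt_or_gt_of_ne fun h => ha ⟨hz, h⟩ with h | h
    exacts [Or.inl ⟨hz, h⟩, Or.inr ⟨hz, h⟩]

theorem disjoint_gammaNeg_gammaPos (S : Set (Euc d)) (i : Fin d) (a : ℝ) :
    Disjoint (GammaNeg S i a) (GammaPos S i a) :=
  Set.disjoint_left.2 fun _ hN hP => lt_asymm hN.2 hP.2

theorem isOpen_gammaNeg (hS : IsOpen S) (i : Fin d) (a : ℝ) : IsOpen (GammaNeg S i a) :=
  hS.inter (isOpen_lt (PiLp.continuous_apply 2 _ i) continuous_const)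

theorem isOpen_gammaPos (hS : IsOpen S) (i : Fin d) (a : ℝ) : IsOpen (GammaPos S i a) :=
  hS.inter (isOpen_lt continuous_const (PiLp.continuous_apply 2 _ i))

theorem isLocallyClosed_gamma (hS : IsOpen S) (i : Fin d) (a : ℝ) :
    IsLocallyClosed (Gamma S i a) :=
  hS.isLocallyClosed.inter
    (isClosed_eq (PiLp.continuous_apply 2 _ i) continuous_const).isLocallyClosed

theorem eventually_add_smul_mem {U : Set (Euc d)} (hU : IsOpen U) {p : Euc d} (hp : p ∈ U)
    (v : Euc d) : ∀ᶠ s : ℝ in 𝓝 0, p + s • v ∈ U :=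
  (Continuous.tendsto' (by fun_prop) 0 p (by simp)).eventually (hU.mem_nhds hp)

theorem eq_and_eq_of_gamma_subset_gamma (hS : IsOpen S) {i i' : Fin d} {a a' : ℝ}
    (hne : (Gamma S i a).Nonempty) (hsub : Gamma S i a ⊆ Gamma S i' a') : i = i' ∧ a = a' := by
  obtain ⟨p, hpS, hpi⟩ := hne
  have hi : i = i' := by
    by_contra hii
    obtain ⟨s, hs, hsne⟩ :=
      (((eventually_add_smul_mem hS hpS (EuclideanSpace.single i' 1)).filter_mono
        nhdsWithin_le_nhds).and self_mem_nhdsWithin).exists (f := 𝓝[≠] (0 : ℝ))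
    have hp' := (hsub ⟨hpS, hpi⟩).2
    have hq := (hsub ⟨hs, by simp [Ne.symm hii, hpi]⟩).2
    exact hsne (by simpa [hp'] using hq)
  subst hi
  exact ⟨rfl, hpi.symm.trans (hsub ⟨hpS, hpi⟩).2⟩

end Separators

section Topology

variable {X : Type*} [TopologicalSpace X]

theorem eq_and_eq_of_subset_of_union_eq_union {U V U' V' : Set X} (hU' : IsOpen U')
    (hV' : IsOpen V') (hUV' : Disjoint U' V') (hUV : Disjoint U V) (hU : IsPreconnected U)
    (hne : U'.Nonempty) (hsub : U' ⊆ U) (h : U ∪ V = U' ∪ V') : U' = U ∧ V' = V := by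
  have hUU' : U ⊆ U' := by
    refine (hU.subset_or_subset hU' hV' hUV' (h ▸ subset_union_left)).resolve_right
      fun hUV'' => ?_
    obtain ⟨x, hx⟩ := hne
    exact hUV'.notMem_of_mem_left hx (hUV'' (hsub hx))
  obtain rfl : U' = U := hsub.antisymm hUU'
  refine ⟨rfl, ?_⟩
  calc V' = (U' ∪ V') \ U' := by rw [union_sdiff_left, hUV'.sdiff_eq_right]
    _ = V := by rw [← h, union_sdiff_left, hUV.sdiff_eq_right]

theorem eq_and_eq_or_eq_and_eq_of_union_eq_union {U V U' V' : Set X} (hU : IsOpen U)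
    (hV : IsOpen V) (hUV : Disjoint U V) (hU' : IsOpen U') (hV' : IsOpen V')
    (hUV' : Disjoint U' V') (hUc : IsPreconnected U) (hVc : IsPreconnected V)
    (hU'c : IsPreconnected U') (hne : U'.Nonempty) (h : U ∪ V = U' ∪ V') :
    (U' = U ∧ V' = V) ∨ (U' = V ∧ V' = U) := by
  rcases hU'c.subset_or_subset hU hV hUV (h ▸ subset_union_left) with hsub | hsub
  · exact Or.inl (eq_and_eq_of_subset_of_union_eq_union hU' hV' hUV' hUV hUc hne hsub h)
  · exact Or.inr (eq_and_eq_of_subset_of_union_eq_union hU' hV' hUV' hUV.symm hVc hne hsub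
      (union_comm V U ▸ h))

theorem exists_eq_univ_of_closure_interior_pairwiseDisjoint [PreconnectedSpace X] [BaireSpace X]
    [Nonempty X] {ι : Type*} {P : Set ι} (hP : P.Finite) {C : ι → Set X}
    (hC : ∀ q ∈ P, IsClosed (C q)) (hcover : ⋃ q ∈ P, C q = univ)
    (hdisj : P.PairwiseDisjoint fun q => closure (interior (C q))) : ∃ q ∈ P, C q = univ := by
  have hK : ⋃ q ∈ P, closure (interior (C q)) = univ := by
    rw [← hP.closure_biUnion]
    exact (dense_biUnion_interior_of_closed hC hP.countable hcover).closure_eq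
  obtain ⟨q₀, hq₀, hp₀⟩ := mem_iUnion₂.1 (hK ▸ mem_univ (Classical.arbitrary X))
  have hrest :
      closure (interior (C q₀)) = (⋃ q ∈ P \ {q₀}, closure (interior (C q)))ᶜ := by
    ext p
    simp only [mem_compl_iff, mem_iUnion₂, Set.mem_sdiff, mem_singleton_iff, not_exists]
    constructor
    · exact fun hp q ⟨hq, hne⟩ hpq => hne (hdisj.elim_set hq hq₀ p hpq hp)
    · intro hp
      obtain ⟨q, hq, hpq⟩ := mem_iUnion₂.1 (hK ▸ mem_univ p)
      by_cases hqq : q = q₀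
      · exact hqq ▸ hpq
      · exact absurd hpq (hp q ⟨hq, hqq⟩)
  have hclopen : IsClopen (closure (interior (C q₀))) :=
    ⟨isClosed_closure,
      hrest ▸ (hP.sdiff.isClosed_biUnion fun _ _ => isClosed_closure).isOpen_compl⟩
  refine ⟨q₀, hq₀, eq_univ_of_univ_subset ?_⟩
  rw [← hclopen.eq_univ ⟨_, hp₀⟩]
  exact closure_minimal interior_subset (hC q₀ hq₀)

end Topology

section Calculus

variable {d : ℕ}

theorem eq_of_surjective_of_coord_eq_zero {A : Euc d →L[ℝ] Euc d} (hA : Function.Surjective A)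
    {i j j' : Fin d} (hj : ∀ v : Euc d, v i = 0 → A v j = 0)
    (hj' : ∀ v : Euc d, v i = 0 → A v j' = 0) : j = j' := by
  by_contra hne
  obtain ⟨w, hw⟩ := hA (EuclideanSpace.single j 1)
  obtain ⟨w', hw'⟩ := hA (EuclideanSpace.single j' 1)
  -- `w' i • w - w i • w'` lies in `{v | v i = 0}` and its image has `j`-th entry `w' i`.
  have hw'i : w' i = 0 := by
    simpa [hw, hw', Ne.symm hne] using hj (w' i • w - w i • w') (by simp [mul_comm])
  simpa [hw'] using hj' w' hw'i

theorem fderiv_apply_eq_zero_of_eventually_eq {f : Euc d → Euc d} {p v : Euc d} {i j : Fin d}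
    {b : ℝ} (hf : DifferentiableAt ℝ f p) (hv : v i = 0)
    (hfb : ∀ᶠ z in 𝓝[{z | z i = p i}] p, f z j = b) : fderiv ℝ f p v j = 0 := by
  have hline : Tendsto (fun s : ℝ => p + s • v) (𝓝 0) (𝓝[{z | z i = p i}] p) :=
    tendsto_nhdsWithin_iff.2
      ⟨Continuous.tendsto' (by fun_prop) 0 p (by simp),
        Eventually.of_forall fun s => by simp [hv]⟩
  have hderiv : HasDerivAt (fun s : ℝ => f (p + s • v) j) (fderiv ℝ f p v j) 0 := by
    have hf' : HasFDerivAt f (fderiv ℝ f p) (p + (0 : ℝ) • v) := by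
      rw [zero_smul, add_zero]; exact hf.hasFDerivAt
    have hγ : HasDerivAt (fun s : ℝ => p + s • v) v 0 := by
      simpa using ((hasDerivAt_id (0 : ℝ)).smul_const v).const_add p
    exact (EuclideanSpace.proj j).hasFDerivAt.comp_hasDerivAt 0 (hf'.comp_hasDerivAt 0 hγ)
  exact hderiv.unique ((hasDerivAt_const (0 : ℝ) b).congr_of_eventuallyEq (hline.eventually hfb))

end Calculus

section Sheets

variable {d : ℕ} {S : Set (Euc d)} {h : Euc d → Euc d}

theorem exists_mapsTo_coord_eq_of_mapsTo_biUnion (hS : IsOpen S) (hh : ContDiffOn ℝ 1 h S)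
    (hsurj : ∀ p ∈ S, Function.Surjective (fderiv ℝ h p)) {i : Fin d} {a : ℝ}
    (hΓ : IsConnected (Gamma S i a)) {P : Set (Fin d × ℝ)} (hP : P.Finite)
    (hmaps : MapsTo h (Gamma S i a) (⋃ q ∈ P, {w | w q.1 = q.2})) :
    ∃ q ∈ P, MapsTo h (Gamma S i a) {w | w q.1 = q.2} := by
  have : ConnectedSpace (Gamma S i a) := isConnected_iff_connectedSpace.1 hΓ
  have : LocallyCompactSpace (Gamma S i a) := (isLocallyClosed_gamma hS i a).locallyCompactSpace
  have : Nonempty (Gamma S i a) := hΓ.nonempty.to_subtype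
  let C : Fin d × ℝ → Set (Gamma S i a) := fun q => {p | h p q.1 = q.2}
  let Flat : Fin d × ℝ → Set (Gamma S i a) := fun q =>
    {p | h p q.1 = q.2 ∧ ∀ v : Euc d, v i = 0 → fderiv ℝ h p v q.1 = 0}
  have hcont : Continuous fun p : Gamma S i a => h p :=
    hh.continuousOn.comp_continuous continuous_subtype_val fun p => p.2.1
  have hcont' : Continuous fun p : Gamma S i a => fderiv ℝ h p :=
    (hh.continuousOn_fderiv_of_isOpen hS le_rfl).comp_continuous continuous_subtype_val
      fun p => p.2.1
  have hC : ∀ q, IsClosed (C q) := fun q =>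
    isClosed_eq ((PiLp.continuous_apply 2 _ q.1).comp hcont) continuous_const
  have hFlat : ∀ q, IsClosed (Flat q) := fun q => by
    simp only [Flat, ofPred_and, ofPred_forall]
    exact (hC q).inter (isClosed_iInter fun v => isClosed_iInter fun _ => isClosed_eq
      ((PiLp.continuous_apply 2 (fun _ : Fin d => ℝ) q.1).comp
        ((continuous_eval_const v).comp hcont'))
      continuous_const)
  have hinterior : ∀ q, interior (C q) ⊆ Flat q := by
    rintro q ⟨z, hzS, rfl⟩ hp
    refine ⟨(interior_subset hp : _ ∈ C q), fun v hv => fderiv_apply_eq_zero_of_eventually_eq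
      (b := q.2) ((hh.differentiableOn one_ne_zero).differentiableAt (hS.mem_nhds hzS)) hv ?_⟩
    have hnhds : Subtype.val '' C q ∈ 𝓝[S ∩ {w | w i = z i}] z :=
      mem_nhds_subtype_iff_nhdsWithin.1 (mem_interior_iff_mem_nhds.1 hp)
    rw [nhdsWithin_inter_of_mem (mem_nhdsWithin_of_mem_nhds (hS.mem_nhds hzS))] at hnhds
    filter_upwards [hnhds] with w ⟨p', hp', hw⟩
    exact hw ▸ hp'
  have hFlat_eq : ∀ q q', (Flat q ∩ Flat q').Nonempty → q = q' := by
    rintro q q' ⟨p, hp, hp'⟩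
    have hj : q.1 = q'.1 := eq_of_surjective_of_coord_eq_zero (hsurj p p.2.1) hp.2 hp'.2
    exact Prod.ext hj (hp.1.symm.trans (hj ▸ hp'.1))
  have hcover : ⋃ q ∈ P, C q = univ := eq_univ_of_forall fun p => by
    simpa [C] using hmaps p.2
  obtain ⟨q, hq, hCq⟩ := exists_eq_univ_of_closure_interior_pairwiseDisjoint hP
    (fun q _ => hC q) hcover fun q _ q' _ hne => Set.disjoint_iff.2 fun p hp =>
      hne (hFlat_eq q q' ⟨p, closure_minimal (hinterior q) (hFlat q) hp.1,
        closure_minimal (hinterior q') (hFlat q') hp.2⟩)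
  refine ⟨q, hq, fun z hz => ?_⟩
  have hzq : (⟨z, hz⟩ : Gamma S i a) ∈ C q := hCq ▸ mem_univ _
  exact hzq

end Sheets

namespace IsSmoothDiffeoOn

variable {d : ℕ} {S S' : Set (Euc d)} {h hinv : Euc d → Euc d}

theorem symm (hd : IsSmoothDiffeoOn h hinv S S') : IsSmoothDiffeoOn hinv h S' S :=
  ⟨hd.mapsTo_inv, hd.mapsTo, hd.right_inv, hd.left_inv, hd.smooth_inv, hd.smooth⟩

theorem leftInvOn (hd : IsSmoothDiffeoOn h hinv S S') : LeftInvOn hinv h S :=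
  fun z hz => hd.left_inv z hz

theorem injOn (hd : IsSmoothDiffeoOn h hinv S S') : InjOn h S :=
  hd.leftInvOn.injOn

theorem image_eq (hd : IsSmoothDiffeoOn h hinv S S') : h '' S = S' :=
  (InvOn.bijOn ⟨hd.leftInvOn, hd.symm.leftInvOn⟩ hd.mapsTo hd.mapsTo_inv).image_eq

theorem isOpen_image (hd : IsSmoothDiffeoOn h hinv S S') (hS' : IsOpen S') {W : Set (Euc d)}
    (hWS : W ⊆ S) (hW : IsOpen W) : IsOpen (h '' W) := by
  rw [← inter_eq_left.2 hWS, hd.leftInvOn.image_inter', hd.image_eq, inter_comm]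
  exact hd.smooth_inv.continuousOn.isOpen_inter_preimage hS' hW

theorem differentiableAt (hd : IsSmoothDiffeoOn h hinv S S') (hS : IsOpen S) {p : Euc d}
    (hp : p ∈ S) : DifferentiableAt ℝ h p :=
  (hd.smooth.differentiableOn (by simp)).differentiableAt (hS.mem_nhds hp)

theorem fderiv_surjective (hd : IsSmoothDiffeoOn h hinv S S') (hS : IsOpen S) (hS' : IsOpen S')
    {p : Euc d} (hp : p ∈ S) : Function.Surjective (fderiv ℝ h p) := by
  have hhp : h p ∈ S' := hd.mapsTo hp
  have hid : h ∘ hinv =ᶠ[𝓝 (h p)] id :=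
    eventually_of_mem (hS'.mem_nhds hhp) fun z hz => hd.right_inv z hz
  have hchain := fderiv_comp (h p) (hd.left_inv p hp ▸ hd.differentiableAt hS hp)
    (hd.symm.differentiableAt hS' hhp)
  rw [hid.fderiv_eq, fderiv_id, hd.left_inv p hp] at hchain
  exact fun u => ⟨fderiv ℝ hinv (h p) u, by simpa using congrArg (· u) hchain.symm⟩

theorem image_halves (hd : IsSmoothDiffeoOn h hinv S S') (hS : IsOpen S) (hS' : IsOpen S')
    {i j : Fin d} {a b : ℝ} (hsep : IsAxisSeparator S i a) (hsep' : IsAxisSeparator S' j b)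
    (himg : h '' Gamma S i a = Gamma S' j b) :
    (GammaNeg S' j b = h '' GammaNeg S i a ∧ GammaPos S' j b = h '' GammaPos S i a) ∨
      (GammaNeg S' j b = h '' GammaPos S i a ∧ GammaPos S' j b = h '' GammaNeg S i a) := by
  have hNS : GammaNeg S i a ⊆ S := fun _ hz => hz.1
  have hPS : GammaPos S i a ⊆ S := fun _ hz => hz.1
  refine eq_and_eq_or_eq_and_eq_of_union_eq_union (hd.isOpen_image hS' hNS (isOpen_gammaNeg hS i a))
    (hd.isOpen_image hS' hPS (isOpen_gammaPos hS i a))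
    ((disjoint_gammaNeg_gammaPos S i a).image hd.injOn hNS hPS) (isOpen_gammaNeg hS' j b)
    (isOpen_gammaPos hS' j b) (disjoint_gammaNeg_gammaPos S' j b)
    (hsep.2.2.isPreconnected.image h (hd.smooth.continuousOn.mono hNS))
    (hsep.2.1.isPreconnected.image h (hd.smooth.continuousOn.mono hPS))
    hsep'.2.2.isPreconnected hsep'.2.2.nonempty ?_
  rw [← image_union, gammaNeg_union_gammaPos, gammaNeg_union_gammaPos,
    hd.injOn.image_sdiff_subset (fun _ hz => hz.1), hd.image_eq, himg]

theorem axis_ne_of_inter_nonempty (hd : IsSmoothDiffeoOn h hinv S S') (hS : IsOpen S)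
    {i i' j j' : Fin d} {a a' b b' : ℝ} (hne : (Gamma S i a ∩ Gamma S i' a').Nonempty)
    (hii : i ≠ i') (himg : h '' Gamma S i a = Gamma S' j b)
    (himg' : h '' Gamma S i' a' = Gamma S' j' b') : j ≠ j' := by
  rintro rfl
  obtain ⟨z, hz, hz'⟩ := hne
  have hb : b = b' :=
    (himg ▸ mem_image_of_mem h hz : h z ∈ Gamma S' j b).2.symm.trans
      (himg' ▸ mem_image_of_mem h hz' : h z ∈ Gamma S' j b').2
  subst hb
  have hΓ : Gamma S i a = Gamma S i' a' :=
    (hd.injOn.image_eq_image_iff (fun _ hz => hz.1) fun _ hz => hz.1).1 (himg.trans himg'.symm)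
  exact hii (eq_and_eq_of_gamma_subset_gamma hS ⟨z, hz⟩ hΓ.subset).1

end IsSmoothDiffeoOn

namespace DiscreteCoordination

variable {d : ℕ} {S S' : Set (Euc d)} {h hinv : Euc d → Euc d}

theorem gamma_subset_grid (C : DiscreteCoordination S) (i : Fin d) (k : Fin (C.n i)) :
    Gamma S i (C.A i k) ⊆ C.grid :=
  subset_iUnion₂ (s := fun i k => Gamma S i (C.A i k)) i k

theorem grid_subset (C : DiscreteCoordination S) : C.grid ⊆ S :=
  iUnion₂_subset fun _ _ _ hz => hz.1

theorem grid_subset_biUnion (C : DiscreteCoordination S) :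
    C.grid ⊆ ⋃ q ∈ range fun t : (i : Fin d) × Fin (C.n i) => (t.1, C.A t.1 t.2),
      {w | w q.1 = q.2} := by
  simp only [grid, iUnion_subset_iff]
  exact fun i k z hz => mem_biUnion (mem_range_self (⟨i, k⟩ : (i : Fin d) × Fin (C.n i))) hz.2

theorem injective_gamma (hS : IsOpen S) (C : DiscreteCoordination S) (i : Fin d) :
    Function.Injective fun k => Gamma S i (C.A i k) := fun k _ he =>
  (C.mono i).injective (eq_and_eq_of_gamma_subset_gamma hS (C.sep i k).1.nonempty he.subset).2

variable (CA : DiscreteCoordination S) (CB : DiscreteCoordination S')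

theorem exists_image_gamma_subset (hd : IsSmoothDiffeoOn h hinv S S') (hS : IsOpen S)
    (hS' : IsOpen S') (hgrid : MapsTo h CA.grid CB.grid) (i : Fin d) (k : Fin (CA.n i)) :
    ∃ (j : Fin d) (l : Fin (CB.n j)), h '' Gamma S i (CA.A i k) ⊆ Gamma S' j (CB.A j l) := by
  obtain ⟨q, ⟨⟨j, l⟩, rfl⟩, hmaps⟩ := exists_mapsTo_coord_eq_of_mapsTo_biUnion hS
    (hd.smooth.of_le (by exact_mod_cast le_top)) (fun _ hp => hd.fderiv_surjective hS hS' hp)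
    (CA.sep i k).1 (finite_range _)
    fun _ hz => CB.grid_subset_biUnion (hgrid (CA.gamma_subset_grid i k hz))
  exact ⟨j, l, image_subset_iff.2 fun z hz => ⟨hd.mapsTo hz.1, hmaps hz⟩⟩

theorem exists_image_gamma_eq (hd : IsSmoothDiffeoOn h hinv S S') (hS : IsOpen S)
    (hS' : IsOpen S') (hgrid : h '' CA.grid = CB.grid) (i : Fin d) (k : Fin (CA.n i)) :
    ∃ (j : Fin d) (l : Fin (CB.n j)), h '' Gamma S i (CA.A i k) = Gamma S' j (CB.A j l) := by
  obtain ⟨j, l, hsub⟩ :=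
    CA.exists_image_gamma_subset CB hd hS hS' (hgrid ▸ mapsTo_image h _) i k
  have hgrid' : hinv '' CB.grid = CA.grid := by
    rw [← hgrid, hd.leftInvOn.image_image' CA.grid_subset]
  obtain ⟨i', k', hsub'⟩ :=
    CB.exists_image_gamma_subset CA hd.symm hS' hS (hgrid' ▸ mapsTo_image hinv _) j l
  -- `hinv ∘ h` squeezes the separator `(i, k)` into the separator `(i', k')`, so they coincide.
  have hΓ : Gamma S i (CA.A i k) ⊆ Gamma S i' (CA.A i' k') := by
    rw [← hd.leftInvOn.image_image' (fun _ hz => hz.1 : Gamma S i (CA.A i k) ⊆ S)]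
    exact (image_mono hsub).trans hsub'
  obtain ⟨rfl, heq⟩ := eq_and_eq_of_gamma_subset_gamma hS (CA.sep i k).1.nonempty hΓ
  refine ⟨j, l, hsub.antisymm ?_⟩
  rw [← hd.symm.leftInvOn.image_image' (fun _ hz => hz.1 : Gamma S' j (CB.A j l) ⊆ S'), heq]
  exact image_mono hsub'

theorem exists_gamma_eq_image (hd : IsSmoothDiffeoOn h hinv S S') (hS : IsOpen S)
    (hS' : IsOpen S') (hgrid : h '' CA.grid = CB.grid) (j : Fin d) (l : Fin (CB.n j)) :
    ∃ (i : Fin d) (k : Fin (CA.n i)), h '' Gamma S i (CA.A i k) = Gamma S' j (CB.A j l) := by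
  obtain ⟨i, k, he⟩ := CB.exists_image_gamma_eq CA hd.symm hS' hS
    (by rw [← hgrid, hd.leftInvOn.image_image' CA.grid_subset]) j l
  exact ⟨i, k, by rw [← he, hd.symm.leftInvOn.image_image' fun _ hz => hz.1]⟩

theorem exists_perm_axis (hd : IsSmoothDiffeoOn h hinv S S') (hS : IsOpen S) (hS' : IsOpen S')
    (hbb : CA.HasBackbone) (hgrid : h '' CA.grid = CB.grid) :
    ∃ σ : Equiv.Perm (Fin d), ∀ (i : Fin d) (k : Fin (CA.n i)) (j : Fin d) (l : Fin (CB.n j)),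
      h '' Gamma S i (CA.A i k) = Gamma S' j (CB.A j l) → j = σ i := by
  obtain ⟨kstar, -, hmeet⟩ := hbb
  choose σ₀ l₀ hσ₀ using fun i => CA.exists_image_gamma_eq CB hd hS hS' hgrid i (kstar i)
  -- every separator off axis `i` meets the backbone separator of axis `i`
  have hoff : ∀ i i' (k : Fin (CA.n i')) j (l : Fin (CB.n j)), i' ≠ i →
      h '' Gamma S i' (CA.A i' k) = Gamma S' j (CB.A j l) → j ≠ σ₀ i :=
    fun i i' k _ _ hii he =>
      (hd.axis_ne_of_inter_nonempty hS (hmeet i i' hii k) (Ne.symm hii) (hσ₀ i) he).symm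
  have hinj : Function.Injective σ₀ := fun i i' he =>
    by_contra fun hii => hoff i i' (kstar i') _ _ (Ne.symm hii) (hσ₀ i') he.symm
  let σ := Equiv.ofBijective σ₀ (Finite.injective_iff_bijective.1 hinj)
  refine ⟨σ, fun i k j l he => ?_⟩
  obtain ⟨i', rfl⟩ := σ.surjective j
  by_contra hii
  exact hoff i' i k _ l (fun h' => hii (h' ▸ rfl)) he rfl

theorem range_image_gamma_eq (hd : IsSmoothDiffeoOn h hinv S S') (hS : IsOpen S)
    (hS' : IsOpen S') (hgrid : h '' CA.grid = CB.grid) {σ : Equiv.Perm (Fin d)}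
    (hσ : ∀ (i : Fin d) (k : Fin (CA.n i)) (j : Fin d) (l : Fin (CB.n j)),
      h '' Gamma S i (CA.A i k) = Gamma S' j (CB.A j l) → j = σ i) (i : Fin d) :
    range (fun k => h '' Gamma S i (CA.A i k)) =
      range fun l => Gamma S' (σ i) (CB.A (σ i) l) := by
  refine Subset.antisymm ?_ ?_
  · rintro _ ⟨k, rfl⟩
    obtain ⟨j, l, he⟩ := CA.exists_image_gamma_eq CB hd hS hS' hgrid i k
    obtain rfl := hσ i k j l he
    exact ⟨l, he.symm⟩
  · rintro _ ⟨l, rfl⟩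
    obtain ⟨i', k, he⟩ := CA.exists_gamma_eq_image CB hd hS hS' hgrid (σ i) l
    obtain rfl := σ.injective (hσ i' k (σ i) l he)
    exact ⟨k, he⟩

theorem n_eq_of_range_eq (hd : IsSmoothDiffeoOn h hinv S S') (hS : IsOpen S) (hS' : IsOpen S')
    {i j : Fin d}
    (hrange : range (fun k => h '' Gamma S i (CA.A i k)) = range fun l => Gamma S' j (CB.A j l)) :
    CA.n i = CB.n j := by
  have hinj : Function.Injective fun k => h '' Gamma S i (CA.A i k) := fun k k' he =>
    CA.injective_gamma hS i ((hd.injOn.image_eq_image_iff (fun _ hz => hz.1) fun _ hz => hz.1).1 he)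
  have hcard := Nat.card_range_of_injective hinj
  rw [hrange, Nat.card_range_of_injective (CB.injective_gamma hS' j)] at hcard
  simpa using hcard.symm

theorem halves_eq_of_range_eq (hd : IsSmoothDiffeoOn h hinv S S') (hS : IsOpen S)
    (hS' : IsOpen S') {i j : Fin d}
    (hrange : range (fun k => h '' Gamma S i (CA.A i k)) = range fun l => Gamma S' j (CB.A j l)) :
    {C : Set (Euc d) | ∃ k : Fin (CA.n i),
        C = h '' GammaNeg S i (CA.A i k) ∨ C = h '' GammaPos S i (CA.A i k)} =
      {C : Set (Euc d) | ∃ l : Fin (CB.n j),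
        C = GammaNeg S' j (CB.A j l) ∨ C = GammaPos S' j (CB.A j l)} := by
  ext C
  constructor
  · rintro ⟨k, hC⟩
    obtain ⟨l, hl⟩ := hrange.subset (mem_range_self k)
    refine ⟨l, ?_⟩
    rcases hd.image_halves hS hS' (CA.sep i k) (CB.sep j l) hl.symm with
      ⟨hN, hP⟩ | ⟨hN, hP⟩ <;>
      rcases hC with rfl | rfl <;> simp [hN, hP]
  · rintro ⟨l, hC⟩
    obtain ⟨k, hk⟩ := hrange.superset (mem_range_self l)
    refine ⟨k, ?_⟩
    rcases hd.image_halves hS hS' (CA.sep i k) (CB.sep j l) hk with ⟨hN, hP⟩ | ⟨hN, hP⟩ <;>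
      rcases hC with rfl | rfl <;> simp [hN, hP]

end DiscreteCoordination

theorem halves_correspondence_general
    {d : ℕ} {S S' : Set (Euc d)} (hS : IsOpen S)
    (hS' : IsOpen S')
    {h hinv : Euc d → Euc d} (hdiff : IsSmoothDiffeoOn h hinv S S')
    (CA : DiscreteCoordination S) (hbb : CA.HasBackbone)
    (CB : DiscreteCoordination S')
    (hgrid : h '' CA.grid = CB.grid) :
    ∃ σ : Equiv.Perm (Fin d), ∀ i : Fin d,
      CA.n i = CB.n (σ i) ∧
      {C : Set (Euc d) | ∃ k : Fin (CA.n i),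
          C = h '' GammaNeg S i (CA.A i k) ∨ C = h '' GammaPos S i (CA.A i k)} =
        {C : Set (Euc d) | ∃ k : Fin (CB.n (σ i)),
          C = GammaNeg S' (σ i) (CB.A (σ i) k) ∨ C = GammaPos S' (σ i) (CB.A (σ i) k)} := by
  obtain ⟨σ, hσ⟩ := CA.exists_perm_axis CB hdiff hS hS' hbb hgrid
  refine ⟨σ, fun i => ?_⟩
  have hrange := CA.range_image_gamma_eq CB hdiff hS hS' hgrid hσ i
  exact ⟨CA.n_eq_of_range_eq CB hdiff hS hS' hrange,
    CA.halves_eq_of_range_eq CB hdiff hS hS' hrange⟩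

/-- **Correspondence of halves along matched axes.** -/
theorem halves_correspondence
    {d : ℕ} {S S' : Set (Euc d)} (hS : IsOpen S) (hSc : IsConnected S)
    (hS' : IsOpen S') (hS'c : IsConnected S')
    {h hinv : Euc d → Euc d} (hdiff : IsSmoothDiffeoOn h hinv S S')
    (CA : DiscreteCoordination S) (hbb : CA.HasBackbone)
    (CB : DiscreteCoordination S')
    (hgrid : h '' CA.grid = CB.grid) :
    ∃ σ : Equiv.Perm (Fin d), ∀ i : Fin d,
      CA.n i = CB.n (σ i) ∧
      {C : Set (Euc d) | ∃ k : Fin (CA.n i),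
          C = h '' GammaNeg S i (CA.A i k) ∨ C = h '' GammaPos S i (CA.A i k)} =
        {C : Set (Euc d) | ∃ k : Fin (CB.n (σ i)),
          C = GammaNeg S' (σ i) (CB.A (σ i) k) ∨ C = GammaPos S' (σ i) (CB.A (σ i) k)} :=
  halves_correspondence_general hS hS' hdiff CA hbb CB hgrid
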